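/- In a star graph with center c and ℓ leaves (diameter 2), in any good system of categories the center c is contained in at least log₂ ℓ categories. -/

import Mathlib

/-!
A leaf `s` has the centre `c` as its only neighbour, so the routing condition for a pair of leaves
`(s, t)` produces a category that contains `c` and `t` but not `s`. Hence distinct leaves meet the
`k` categories through `c` in distinct subfamilies, and `ℓ ≤ 2 ^ k`.
-/

open Finset SimpleGraph

variable {V : Type*}

def catDist [DecidableEq V] (S : Finset (Finset V)) (s t : V) : ℕ :=
  (S.filter fun C => t ∈ C ∧ s ∉ C).card

def IsGoodSystem [DecidableEq V] (G : SimpleGraph V) (S : Finset (Finset V)) : Prop :=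
  (∀ C ∈ S, (G.induce (C : Set V)).Connected) ∧
    ∀ s t : V, s ≠ t → ∃ u, G.Adj s u ∧ catDist S u t < catDist S s t

def memdim [DecidableEq V] [Fintype V] (S : Finset (Finset V)) : ℕ :=
  univ.sup fun v : V => (S.filter fun C => v ∈ C).card

noncomputable def graphDiam [Fintype V] (G : SimpleGraph V) : ℕ :=
  univ.sup fun p : V × V => G.dist p.1 p.2

noncomputable def minMemdim (V : Type*) [DecidableEq V] [Fintype V] (G : SimpleGraph V) : ℕ :=
  sInf {m | ∃ S : Finset (Finset V), IsGoodSystem G S ∧ memdim S = m}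

def starGraph' (ℓ : ℕ) : SimpleGraph (Option (Fin ℓ)) where
  Adj a b := (a = none) ≠ (b = none)
  symm := ⟨fun _ _ h => h.symm⟩
  loopless := ⟨fun _ h => h rfl⟩

theorem exists_mem_of_catDist_lt [DecidableEq V] {S : Finset (Finset V)} {s t u : V}
    (h : catDist S u t < catDist S s t) : ∃ C ∈ S, t ∈ C ∧ s ∉ C ∧ u ∈ C := by
  obtain ⟨C, hC, hCu⟩ := exists_mem_notMem_of_card_lt_card h
  simp only [mem_filter, not_and, not_not] at hC hCu
  exact ⟨C, hC.1, hC.2.1, hC.2.2, hCu hC.1 hC.2.1⟩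

theorem IsGoodSystem.card_pendant_le [DecidableEq V] {G : SimpleGraph V} {S : Finset (Finset V)}
    (hS : IsGoodSystem G S) {c : V} {L : Finset V} (hL : ∀ s ∈ L, ∀ u, G.Adj s u → u = c) :
    #L ≤ 2 ^ #(S.filter fun C => c ∈ C) := by
  set Sc := S.filter fun C => c ∈ C
  have hinj : Set.InjOn (fun s => Sc.filter fun C => s ∈ C) L := by
    intro s hs t _ hst
    by_contra hne
    obtain ⟨u, hsu, hlt⟩ := hS.2 s t hne
    obtain ⟨C, hC, htC, hsC, hcC⟩ := exists_mem_of_catDist_lt (hL s hs u hsu ▸ hlt)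
    have hCt : C ∈ Sc.filter fun C => t ∈ C := by simp [Sc, hC, hcC, htC]
    rw [← show Sc.filter (s ∈ ·) = Sc.filter (t ∈ ·) from hst] at hCt
    exact hsC (mem_filter.1 hCt).2
  calc #L ≤ #Sc.powerset :=
        card_le_card_of_injOn _ (fun s _ => mem_powerset.2 (filter_subset _ _)) hinj
    _ = 2 ^ #Sc := card_powerset Sc

theorem Real.logb_two_le_of_le_two_pow {m n : ℕ} (h : m ≤ 2 ^ n) : Real.logb 2 m ≤ n := by
  rcases Nat.eq_zero_or_pos m with rfl | hm_pos
  · simp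
  · rw [Real.logb_le_iff_le_rpow (by norm_num) (by positivity), Real.rpow_natCast]
    exact_mod_cast h

theorem starGraph'_adj_some {ℓ : ℕ} {v : Fin ℓ} {u : Option (Fin ℓ)}
    (h : (starGraph' ℓ).Adj (some v) u) : u = none := by
  simpa [starGraph'] using h

theorem stmt7 (ℓ : ℕ) (S : Finset (Finset (Option (Fin ℓ))))
    (hS : IsGoodSystem (starGraph' ℓ) S) :
    Real.logb 2 ℓ ≤ (S.filter fun C => (none : Option (Fin ℓ)) ∈ C).card := by
  have h := hS.card_pendant_le (L := univ.map Function.Embedding.some)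
    (by simpa using fun v u => starGraph'_adj_some (v := v) (u := u))
  rw [card_map, card_univ, Fintype.card_fin] at h
  exact Real.logb_two_le_of_le_two_pow h
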